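/- arXiv:2009.01609 — 3 statements merged into one kernel-verified Lean document; each statement's English description precedes it below -/
import Mathlib

section
/- If κ is a regular uncountable cardinal that is 2-stationary, then κ is a weakly Mahlo cardinal. -/
open Cardinal

/-- `C` is club in `𝒫_ν(W)` (the subsets of `W` of cardinality `<ν`): `C` consists of
such sets, is cofinal in `(𝒫_ν(W), ⊆)` and is closed under unions of `⊆`-chains of
length `<ν`. -/
def PklClub {α : Type} (W : Set α) (ν : Cardinal.{0}) (C : Set (Set α)) : Prop :=
  (∀ c ∈ C, c ⊆ W ∧ Cardinal.mk ↥c < ν) ∧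
  (∀ x : Set α, x ⊆ W → Cardinal.mk ↥x < ν → ∃ c ∈ C, x ⊆ c) ∧
  (∀ D : Set (Set α), D ⊆ C → D.Nonempty → IsChain (· ⊆ ·) D →
    Cardinal.mk ↥D < ν → ⋃₀ D ∈ C)

/-- `S` is stationary in `𝒫_ν(W)`: it meets every club subset of `𝒫_ν(W)`. -/
def PklStat {α : Type} (W : Set α) (ν : Cardinal.{0}) (S : Set (Set α)) : Prop :=
  ∀ C : Set (Set α), PklClub W ν C → (S ∩ C).Nonempty

/-- `C` is a closed unbounded subset of the ordinal `o`. -/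
def OrdClub (o : Ordinal.{0}) (C : Set Ordinal.{0}) : Prop :=
  C ⊆ Set.Iio o ∧ (∀ α < o, ∃ β ∈ C, α ≤ β) ∧
  (∀ s : Set Ordinal.{0}, s ⊆ C → s.Nonempty → sSup s < o → sSup s ∈ C)

/-- `κ` is weakly Mahlo: `κ` is regular uncountable and the set of regular cardinals
below `κ` is stationary in `κ`. -/
def IsWeaklyMahlo (κ : Cardinal.{0}) : Prop :=
  κ.IsRegular ∧ Cardinal.aleph0 < κ ∧
  ∀ C : Set Ordinal.{0}, OrdClub κ.ord C →
    ∃ α ∈ C, α.card.ord = α ∧ α.card.IsRegular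

/-- For `a ⊆ λ` (with `λ` represented by its canonical well-ordered set
`λ.ord.ToType`), the intersection `κ ∩ a`: the set of elements of `a` whose
position in the well-order is an ordinal `< κ`. -/
def kapInt (lam κ : Cardinal.{0}) (a : Set lam.ord.ToType) : Set lam.ord.ToType :=
  {x ∈ a | ((Ordinal.ToType.mk (o := lam.ord)).symm x).1 < κ.ord}

/-- The regular cardinal `κ` has the 2-stationarity property: for every `λ ≥ κ`,
`𝒫_κ(λ)` is 2-stationary as a subset of itself, i.e. for every stationary
`𝒯 ⊆ 𝒫_κ(λ)` there is `a ∈ 𝒫_κ(λ)` such that `|κ ∩ a|` is regular uncountable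
and `𝒯 ∩ 𝒫_{κ∩a}(a)` is stationary in `𝒫_{κ∩a}(a)`. -/
def TwoStationary (κ : Cardinal.{0}) : Prop :=
  ∀ lam : Cardinal.{0}, κ ≤ lam →
    ∀ T : Set (Set lam.ord.ToType), (∀ x ∈ T, Cardinal.mk ↥x < κ) →
      PklStat Set.univ κ T →
      ∃ a : Set lam.ord.ToType, Cardinal.mk ↥a < κ ∧
        (Cardinal.mk ↥(kapInt lam κ a)).IsRegular ∧
        Cardinal.aleph0 < Cardinal.mk ↥(kapInt lam κ a) ∧
        PklStat a (Cardinal.mk ↥(kapInt lam κ a))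
          {x ∈ T | x ⊆ a ∧ Cardinal.mk ↥x < Cardinal.mk ↥(kapInt lam κ a)}

/-! With `λ = κ`, the members of a club `C ⊆ κ`, viewed as subsets of `κ`, form a stationary
subset of `𝒫_κ(κ)`. Reflecting it gives `a` with `μ = |a|` regular uncountable such that the
members of `C` below `μ` are stationary in `𝒫_μ(a)`; they must therefore cover every point of
`a`, which makes `C` unbounded in `μ`, and closure of `C` puts the regular cardinal `μ` in `C`. -/

open Set

/-- The ordinal `α`, as a subset of `λ`. -/
def seg (lam : Cardinal.{0}) (α : Ordinal.{0}) : Set lam.ord.ToType :=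
  {p | ((Ordinal.ToType.mk (o := lam.ord)).symm p).1 < α}

section Segments

variable {lam : Cardinal.{0}}

lemma mem_seg {α : Ordinal.{0}} {p : lam.ord.ToType} :
    p ∈ seg lam α ↔ ((Ordinal.ToType.mk (o := lam.ord)).symm p).1 < α := Iff.rfl

lemma seg_mono {α β : Ordinal.{0}} (h : α ≤ β) : seg lam α ⊆ seg lam β :=
  fun _ hp => mem_seg.mpr ((mem_seg.mp hp).trans_le h)

lemma mk_seg {α : Ordinal.{0}} (hα : α ≤ lam.ord) : #(seg lam α) = α.card := by
  have e1 : seg lam α ≃ {b : Iio lam.ord // b.1 < α} :=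
    Equiv.subtypeEquiv (Ordinal.ToType.mk (o := lam.ord)).symm.toEquiv fun _ => Iff.rfl
  have e2 : {b : Iio lam.ord // b.1 < α} ≃ Iio α :=
    { toFun := fun b => ⟨b.1.1, b.2⟩
      invFun := fun o => ⟨⟨o.1, lt_of_lt_of_le o.2 hα⟩, o.2⟩
      left_inv := fun _ => rfl
      right_inv := fun _ => rfl }
  rw [mk_congr ((e1.trans e2).trans (Ordinal.ToType.mk (o := α)).toEquiv), mk_toType]

lemma mk_seg_lt {α : Ordinal.{0}} (hα : α < lam.ord) : #(seg lam α) < lam := by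
  rw [mk_seg hα.le]
  exact lt_ord.mp hα

lemma exists_subset_seg (hreg : lam.IsRegular) {x : Set lam.ord.ToType} (hx : #x < lam) :
    ∃ β < lam.ord, x ⊆ seg lam β := by
  set pos : x → Ordinal.{0} := fun p => ((Ordinal.ToType.mk (o := lam.ord)).symm p.1).1
  have hsup : ⨆ p, Order.succ (pos p) < lam.ord :=
    Ordinal.iSup_lt_of_lt_cof (by rwa [hreg.cof_ord]) fun p =>
      (isSuccLimit_ord hreg.aleph0_le).succ_lt (Ordinal.ToType.mk.symm p.1).2
  exact ⟨_, hsup, fun p hp =>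
    (Order.lt_succ _).trans_le (Ordinal.le_iSup (fun p => Order.succ (pos p)) ⟨p, hp⟩)⟩

lemma iUnion_eq_seg_iSup {X : ℕ → Set lam.ord.ToType} {a : ℕ → Ordinal.{0}}
    (hXa : ∀ n, X n ⊆ seg lam (a n)) (haX : ∀ n, seg lam (a n) ⊆ X (n + 1)) :
    ⋃ n, X n = seg lam (⨆ n, a n) := by
  refine (iUnion_subset fun n => (hXa n).trans (seg_mono (Ordinal.le_iSup a n))).antisymm ?_
  intro p hp
  obtain ⟨n, hn⟩ := Ordinal.lt_iSup_iff.mp (mem_seg.mp hp)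
  exact mem_iUnion.mpr ⟨n + 1, haX n hn⟩

lemma kapInt_self (a : Set lam.ord.ToType) : kapInt lam lam a = a :=
  sep_eq_self_iff_mem_true.mpr fun p _ => ((Ordinal.ToType.mk (o := lam.ord)).symm p).2

end Segments

section Clubs

lemma OrdClub.iSup_mem {o : Ordinal.{0}} {C : Set Ordinal.{0}} (hC : OrdClub o C)
    {a : ℕ → Ordinal.{0}} (ha : ∀ n, a n ∈ C) (hlt : ⨆ n, a n < o) : ⨆ n, a n ∈ C :=
  hC.2.2 _ (range_subset_iff.mpr ha) (range_nonempty a) hlt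

lemma OrdClub.mem_of_unbounded {o ν : Ordinal.{0}} {C : Set Ordinal.{0}} (hC : OrdClub o C)
    (hνo : ν < o) (hν : 0 < ν) (hunb : ∀ γ < ν, ∃ α ∈ C, γ < α ∧ α < ν) : ν ∈ C := by
  set s := {α | α ∈ C ∧ α < ν}
  have hne : s.Nonempty := by
    obtain ⟨α, hα, -, hαν⟩ := hunb 0 hν
    exact ⟨α, hα, hαν⟩
  have hsup : sSup s = ν := by
    refine (csSup_le hne fun α hα => hα.2.le).antisymm (le_of_forall_lt fun γ hγ => ?_)
    obtain ⟨α, hα, hγα, hαν⟩ := hunb γ hγ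
    exact hγα.trans_le (le_csSup ⟨ν, fun β hβ => hβ.2.le⟩ ⟨hα, hαν⟩)
  rw [← hsup]
  exact hC.2.2 s (fun α hα => hα.1) hne (hsup ▸ hνo)

variable {α : Type} {W : Set α} {ν : Cardinal.{0}}

lemma PklClub.iUnion_mem {C : Set (Set α)} (hC : PklClub W ν C) (hν : ℵ₀ < ν)
    {X : ℕ → Set α} (hX : Monotone X) (hmem : ∀ n, X n ∈ C) : ⋃ n, X n ∈ C := by
  refine hC.2.2 _ (range_subset_iff.mpr hmem) (range_nonempty X) hX.isChain_range ?_
  exact mk_range_le.trans_lt (by rwa [mk_nat])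

lemma pklClub_setOf_mem (hν : ν.IsRegular) {p : α} (hp : p ∈ W) :
    PklClub W ν {c | c ⊆ W ∧ #c < ν ∧ p ∈ c} := by
  refine ⟨fun c hc => ⟨hc.1, hc.2.1⟩, fun x hxW hx => ?_, fun D hD hne _ hDν => ?_⟩
  · refine ⟨insert p x, ⟨insert_subset hp hxW, ?_, mem_insert p x⟩, subset_insert p x⟩
    exact mk_insert_le.trans_lt
      (add_lt_of_lt hν.aleph0_le hx (one_lt_aleph0.trans_le hν.aleph0_le))
  · obtain ⟨c, hc⟩ := hne
    refine ⟨sUnion_subset fun d hd => (hD hd).1, ?_, mem_sUnion_of_mem (hD hc).2.2 hc⟩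
    rw [sUnion_eq_iUnion, card_iUnion_lt_iff_forall_of_isRegular hν hDν]
    exact fun d => (hD d.2).2.1

lemma PklStat.exists_mem_of_mem {S : Set (Set α)} (hS : PklStat W ν S) (hν : ν.IsRegular)
    {p : α} (hp : p ∈ W) : ∃ x ∈ S, p ∈ x := by
  obtain ⟨x, hxS, -, -, hpx⟩ := hS _ (pklClub_setOf_mem hν hp)
  exact ⟨x, hxS, hpx⟩

end Clubs

section Stationarity

variable {κ : Cardinal.{0}} {C : Set Ordinal.{0}}

/-- Interleave an `ω`-sequence of club members with initial segments from `C`; both unions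
meet in the segment cut off at the supremum. -/
lemma pklStat_image_seg (hreg : κ.IsRegular) (hunc : ℵ₀ < κ) (hC : OrdClub κ.ord C) :
    PklStat univ κ (seg κ '' C) := by
  intro 𝒞 h𝒞
  have hbound : ∀ x : 𝒞, ∃ α : C, (x : Set κ.ord.ToType) ⊆ seg κ α := fun x => by
    obtain ⟨β, hβ, hxβ⟩ := exists_subset_seg hreg (h𝒞.1 x x.2).2
    obtain ⟨α, hα, hβα⟩ := hC.2.1 β hβ
    exact ⟨⟨α, hα⟩, hxβ.trans (seg_mono hβα)⟩
  have hcover : ∀ α : C, ∃ y : 𝒞, seg κ α ⊆ y := fun α => by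
    obtain ⟨y, hy, hαy⟩ := h𝒞.2.1 _ (subset_univ _) (mk_seg_lt (hC.1 α.2))
    exact ⟨⟨y, hy⟩, hαy⟩
  choose f hf using hbound
  choose g hg using hcover
  obtain ⟨x₀, hx₀, -⟩ := h𝒞.2.1 ∅ (empty_subset _) (by simpa using hreg.pos)
  set X : ℕ → 𝒞 := fun n => (g ∘ f)^[n] ⟨x₀, hx₀⟩
  have hXa : ∀ n, (X n : Set κ.ord.ToType) ⊆ seg κ (f (X n)) := fun n => hf _
  have haX : ∀ n, seg κ (f (X n)) ⊆ X (n + 1) := fun n => by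
    simp only [X, Function.iterate_succ_apply']
    exact hg _
  have hsup : ⨆ n, (f (X n) : Ordinal.{0}) ∈ C :=
    hC.iSup_mem (fun n => (f (X n)).2) <| Ordinal.iSup_lt_of_lt_cof
      (by rwa [hreg.cof_ord, mk_nat]) fun n => hC.1 (f (X n)).2
  refine ⟨_, ⟨_, hsup, rfl⟩, ?_⟩
  rw [← iUnion_eq_seg_iSup hXa haX]
  exact h𝒞.iUnion_mem hunc (monotone_nat_of_le_succ fun n => (hXa n).trans (haX n))
    fun n => (X n).2

lemma exists_mem_between_of_pklStat (hC : C ⊆ Iio κ.ord) {a : Set κ.ord.ToType} (ha : #a < κ)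
    (hreg : (#a).IsRegular) (hstat : PklStat a #a {x ∈ seg κ '' C | x ⊆ a ∧ #x < #a})
    {γ : Ordinal.{0}} (hγ : γ < (#a).ord) : ∃ α ∈ C, γ < α ∧ α < (#a).ord := by
  have hγκ : γ < κ.ord := hγ.trans (ord_lt_ord.mpr ha)
  obtain ⟨p, hpa, hpγ⟩ : ∃ p ∈ a, p ∉ seg κ γ := not_subset.mp fun hsub =>
    (mk_le_mk_of_subset hsub).not_gt (by rw [mk_seg hγκ.le]; exact lt_ord.mp hγ)
  obtain ⟨_, ⟨⟨α, hα, rfl⟩, -, hαa⟩, hpα⟩ := hstat.exists_mem_of_mem hreg hpa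
  refine ⟨α, hα, (not_lt.mp hpγ).trans_lt (mem_seg.mp hpα), ?_⟩
  rwa [mk_seg (hC hα).le, ← lt_ord] at hαa

end Stationarity

/-- A regular uncountable 2-stationary cardinal is weakly Mahlo. -/
theorem twoStationary_isWeaklyMahlo (κ : Cardinal.{0}) (hreg : κ.IsRegular)
    (hunc : Cardinal.aleph0 < κ) (h : TwoStationary κ) : IsWeaklyMahlo κ := by
  refine ⟨hreg, hunc, fun C hC => ?_⟩
  obtain ⟨a, ha, hμreg, hμunc, hμstat⟩ := h κ le_rfl (seg κ '' C)
    (by rintro _ ⟨α, hα, rfl⟩; exact mk_seg_lt (hC.1 hα)) (pklStat_image_seg hreg hunc hC)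
  rw [kapInt_self] at hμreg hμunc hμstat
  have hmem : (#a).ord ∈ C := hC.mem_of_unbounded (ord_lt_ord.mpr ha) hμreg.ord_pos
    fun γ hγ => exists_mem_between_of_pklStat hC.1 ha hμreg hμstat hγ
  exact ⟨_, hmem, by rw [card_ord], by rwa [card_ord]⟩
end

section
/- SDLS⁻(ℒ^{ℵ₀}_{stat}, <ℵ₂) implies the reflection principle RP: for every regular λ ≥ ℵ₂, every stationary S ⊆ [λ]^{ℵ₀}, and every X ∈ [λ]^{ℵ₁}, there is Y ∈ [λ]^{ℵ₁} with cf(Y) = ω₁, X ⊆ Y, and S ∩ [Y]^{ℵ₀} stationary in [Y]^{ℵ₀}. -/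
open Cardinal FirstOrder

namespace StatLogic

/-- `C` is club in `[W]^{ℵ₀}`: a collection of countable subsets of `W` which is
cofinal in `([W]^{ℵ₀}, ⊆)` and closed under unions of increasing `ω`-chains. -/
def CtbClubIn {α : Type*} (W : Set α) (C : Set (Set α)) : Prop :=
  (∀ c ∈ C, c ⊆ W ∧ c.Countable) ∧
  (∀ x : Set α, x ⊆ W → x.Countable → ∃ c ∈ C, x ⊆ c) ∧
  (∀ f : ℕ → Set α, (∀ n, f n ∈ C) → Monotone f → (⋃ n, f n) ∈ C)

/-- `S` is stationary in `[W]^{ℵ₀}`: it meets every club subset of `[W]^{ℵ₀}`. -/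
def CtbStatIn {α : Type*} (W : Set α) (S : Set (Set α)) : Prop :=
  ∀ C : Set (Set α), CtbClubIn W C → (S ∩ C).Nonempty

/-- Formulas of the stationary logic `ℒ^{ℵ₀}_{stat}` over the first-order language
`L`, with `n` free first-order and `m` free (weak monadic second-order) variables.
The second-order variables range over countable subsets of the structure and the
second-order quantifier `stat` means "for stationarily many countable subsets". -/
inductive StatFormula (L : FirstOrder.Language.{0, 0}) : ℕ → ℕ → Type
  | equal {n m : ℕ} (t₁ t₂ : L.Term (Fin n)) : StatFormula L n m
  | rel {n m l : ℕ} (R : L.Relations l) (ts : Fin l → L.Term (Fin n)) :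
      StatFormula L n m
  | mem {n m : ℕ} (x : Fin n) (X : Fin m) : StatFormula L n m
  | not {n m : ℕ} (φ : StatFormula L n m) : StatFormula L n m
  | and {n m : ℕ} (φ ψ : StatFormula L n m) : StatFormula L n m
  | exFO {n m : ℕ} (φ : StatFormula L (n + 1) m) : StatFormula L n m
  | stat {n m : ℕ} (φ : StatFormula L n (m + 1)) : StatFormula L n m

/-- Satisfaction for `ℒ^{ℵ₀}_{stat}`-formulas in an `L`-structure `A`, with the
second-order quantifier `stat X φ` interpreted as: the set of countable `U ⊆ A`
with `φ[U]` is stationary in `[A]^{ℵ₀}`. -/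
def Realize (L : FirstOrder.Language.{0, 0}) (A : Type) [L.Structure A] :
    ∀ {n m : ℕ}, StatFormula L n m → (Fin n → A) → (Fin m → Set A) → Prop
  | _, _, .equal t₁ t₂, v, _ => t₁.realize v = t₂.realize v
  | _, _, .rel R ts, v, _ => FirstOrder.Language.Structure.RelMap R (fun i => (ts i).realize v)
  | _, _, .mem x X, v, w => v x ∈ w X
  | _, _, .not φ, v, w => ¬ Realize L A φ v w
  | _, _, .and φ ψ, v, w => Realize L A φ v w ∧ Realize L A ψ v w
  | _, _, .exFO φ, v, w => ∃ a : A, Realize L A φ (Fin.snoc v a) w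
  | _, _, .stat φ, v, w =>
      CtbStatIn Set.univ
        {U : Set A | U.Countable ∧ Realize L A φ v (Fin.snoc w U)}

/-- The strong downward Löwenheim–Skolem theorem `SDLS⁻(ℒ^{ℵ₀}_{stat}, <κ)`:
every uncountable structure of a countable signature has a substructure of
cardinality `<κ` which is `≺⁻`-elementary for stationary logic, i.e. elementary
with respect to all `ℒ^{ℵ₀}_{stat}`-formulas without free second-order
variables (the stationary quantifier being interpreted internally in the
substructure and in the full structure respectively). -/
def SDLSminus (κ : Cardinal.{0}) : Prop :=
  ∀ (L : FirstOrder.Language.{0, 0}) (A : Type) [inst : L.Structure A],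
    Countable (Σ n, L.Functions n) → Countable (Σ n, L.Relations n) →
    Uncountable A →
    ∃ S : L.Substructure A, Cardinal.mk ↥S < κ ∧
      ∀ (n : ℕ) (φ : StatFormula L n 0) (v : Fin n → ↥S),
        Realize L ↥S φ v Fin.elim0 ↔
          Realize L A φ (fun i => (v i : A)) Fin.elim0

/-- The strong downward Löwenheim–Skolem theorem `SDLS(ℒ^{ℵ₀}_{stat}, <κ)`:
as `SDLS⁻`, but with full elementarity for `ℒ^{ℵ₀}_{stat}`, allowing free
second-order parameters, i.e. countable subsets of the substructure. -/
def SDLSfull (κ : Cardinal.{0}) : Prop :=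
  ∀ (L : FirstOrder.Language.{0, 0}) (A : Type) [inst : L.Structure A],
    Countable (Σ n, L.Functions n) → Countable (Σ n, L.Relations n) →
    Uncountable A →
    ∃ S : L.Substructure A, Cardinal.mk ↥S < κ ∧
      ∀ (n m : ℕ) (φ : StatFormula L n m) (v : Fin n → ↥S) (w : Fin m → Set A),
        (∀ i, (w i).Countable ∧ w i ⊆ (S : Set A)) →
        (Realize L ↥S φ v (fun i => {x : ↥S | (x : A) ∈ w i}) ↔
          Realize L A φ (fun i => (v i : A)) w)

end StatLogic

open StatLogic

/-- `Y` (a subset of a linear order) has cofinality `ω₁`: the least cardinality of a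
subset of `Y` cofinal in `Y` is `ℵ₁`. -/
def HasCofinalityAleph1 {α : Type} [LinearOrder α] (Y : Set α) : Prop :=
  (∃ Z ⊆ Y, (∀ y ∈ Y, ∃ z ∈ Z, y ≤ z) ∧ Cardinal.mk ↥Z = Cardinal.aleph 1) ∧
  (∀ Z ⊆ Y, (∀ y ∈ Y, ∃ z ∈ Z, y ≤ z) → Cardinal.aleph 1 ≤ Cardinal.mk ↥Z)

/-- The reflection principle `RP`: for every regular `λ ≥ ℵ₂`, every stationary
`S ⊆ [λ]^{ℵ₀}` and every `X ∈ [λ]^{ℵ₁}` there is `Y ∈ [λ]^{ℵ₁}` with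
`cf(Y) = ω₁`, `X ⊆ Y` and `S ∩ [Y]^{ℵ₀}` stationary in `[Y]^{ℵ₀}`.
(The cardinal `λ` is represented by its canonical well-ordered set `λ.ord.toType`.) -/
def RP : Prop :=
  ∀ lam : Cardinal.{0}, lam.IsRegular → Cardinal.aleph 2 ≤ lam →
    ∀ S : Set (Set lam.ord.ToType), (∀ x ∈ S, x.Countable) →
      CtbStatIn Set.univ S →
      ∀ X : Set lam.ord.ToType, Cardinal.mk ↥X = Cardinal.aleph 1 →
        ∃ Y : Set lam.ord.ToType, Cardinal.mk ↥Y = Cardinal.aleph 1 ∧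
          HasCofinalityAleph1 Y ∧ X ⊆ Y ∧ CtbStatIn Y {x ∈ S | x ⊆ Y}


/-!
Let `P ⊆ λ` be the ordinals with countably many predecessors (a copy of `ω₁`) and consider the
structure on `λ ⊕ S` with the points of `λ`, their order, the predicate `P`, the relation
`a ∈ t` between points and codes `t ∈ S`, and countably many unary functions which enumerate the
predecessors of each `a ∈ P`, the elements of each code, and a map of `P` onto `X`. Let `B` be a
`≺⁻`-substructure of size `≤ ℵ₁` and `Y = B ∩ λ`. Three sentences true in the big structure
reflect to `B`:
* "`P` is uncountable": so `Y ∩ P` is uncountable; being closed downwards in `P`, it is all of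
  `P`, whence `X ⊆ Y` and `|Y| = ℵ₁`;
* "every countable set of points is strictly bounded" (true by regularity of `λ`): so `cf Y = ω₁`;
* "stationarily many countable sets are coded" (true because `S` is stationary, after lifting
  stationarity from `[λ]^ℵ₀` to `[λ ⊕ S]^ℵ₀`): projecting this stationary subset of `[B]^ℵ₀`
  to `[Y]^ℵ₀` gives sets of `S ∩ [Y]^ℵ₀`, as the codes in `B` are subsets of `Y`.
-/

open Set Function FirstOrder.Language FirstOrder.Language.Structure

namespace StatLogic

section Stationarity

variable {α β A : Type*}

lemma ctbClubIn_countable : CtbClubIn (univ : Set α) {x | x.Countable} :=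
  ⟨fun _ hc => ⟨subset_univ _, hc⟩, fun x _ hx => ⟨x, hx, subset_rfl⟩,
    fun _ hf _ => countable_iUnion hf⟩

lemma ctbClubIn_superset {p : Set α} (hp : p.Countable) :
    CtbClubIn (univ : Set α) {x | x.Countable ∧ p ⊆ x} :=
  ⟨fun _ hc => ⟨subset_univ _, hc.1⟩,
    fun x _ hx => ⟨x ∪ p, ⟨hx.union hp, subset_union_right⟩, subset_union_left⟩,
    fun f hf _ => ⟨countable_iUnion fun n => (hf n).1, (hf 0).2.trans (subset_iUnion f 0)⟩⟩

lemma CtbStatIn.mono {W : Set α} {S T : Set (Set α)} (hS : CtbStatIn W S) (hST : S ⊆ T) :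
    CtbStatIn W T :=
  fun C hC => (hS C hC).mono (inter_subset_inter_left C hST)

lemma ctbStatIn_setOf_not_subset_iff {p : Set α} :
    CtbStatIn univ {U | U.Countable ∧ ¬ p ⊆ U} ↔ ¬ p.Countable := by
  refine ⟨fun h hp => ?_, fun hp C hC => ?_⟩
  · obtain ⟨U, ⟨-, hpU⟩, -, hU⟩ := h _ (ctbClubIn_superset hp)
    exact hpU hU
  · obtain ⟨c, hc, -⟩ := hC.2.1 ∅ (empty_subset _) countable_empty
    have hct := (hC.1 c hc).2
    exact ⟨c, ⟨hct, fun hpc => hp (hct.mono hpc)⟩, hc⟩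

lemma not_ctbStatIn_setOf_not_iff {p : Set α → Prop} (hp : ∀ U V, U ⊆ V → p V → p U) :
    ¬ CtbStatIn univ {U | U.Countable ∧ ¬ p U} ↔ ∀ U : Set α, U.Countable → p U := by
  refine ⟨fun h U hU => ?_, fun h hst => ?_⟩
  · by_contra hpU
    refine h fun C hC => ?_
    obtain ⟨c, hc, hUc⟩ := hC.2.1 U (subset_univ U) hU
    exact ⟨c, ⟨(hC.1 c hc).2, fun hpc => hpU (hp U c hUc hpc)⟩, hc⟩
  · obtain ⟨U, ⟨hU, hpU⟩, -⟩ := hst _ ctbClubIn_countable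
    exact hpU (h U hU)

lemma exists_forall_mem_of_monotone {f : ℕ → Set β} (hf : Monotone f) {l : List β}
    (hl : ∀ a ∈ l, a ∈ ⋃ n, f n) : ∃ n, ∀ a ∈ l, a ∈ f n := by
  classical
  have hsub : (l.toFinset : Set β) ⊆ ⋃ n, f n := by simpa [subset_def] using hl
  obtain ⟨n, hn⟩ := hf.directed_le.exists_mem_subset_of_finset_subset_biUnion hsub
  exact ⟨n, fun a ha => hn (by simpa using ha)⟩

def ClosedUnder (h : List β → Set β) (x : Set β) : Prop :=
  ∀ l : List β, (∀ a ∈ l, a ∈ x) → h l ⊆ x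

lemma ClosedUnder.iUnion {h : List β → Set β} {f : ℕ → Set β} (hf : Monotone f)
    (hclosed : ∀ n, ClosedUnder h (f n)) : ClosedUnder h (⋃ n, f n) := by
  intro l hl
  obtain ⟨n, hn⟩ := exists_forall_mem_of_monotone hf hl
  exact (hclosed n l hn).trans (subset_iUnion f n)

lemma ctbClubIn_closedUnder {h : List β → Set β} (hh : ∀ l, (h l).Countable) :
    CtbClubIn (univ : Set β) {x | x.Countable ∧ ClosedUnder h x} := by
  refine ⟨fun _ hx => ⟨subset_univ _, hx.1⟩, fun x₀ _ hx₀ => ?_,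
    fun f hf hmono => ⟨countable_iUnion fun n => (hf n).1, .iUnion hmono fun n => (hf n).2⟩⟩
  let g : Set β → Set β := fun y => y ∪ ⋃ l ∈ {l : List β | ∀ a ∈ l, a ∈ y}, h l
  have hg_countable : ∀ y : Set β, y.Countable → (g y).Countable := by
    intro y hy
    have : Countable y := hy.to_subtype
    refine hy.union (Countable.biUnion ?_ fun l _ => hh l)
    rw [← range_list_map_coe]
    exact countable_range _
  have hmono : Monotone fun k => g^[k] x₀ :=
    monotone_nat_of_le_succ fun k => by
      rw [iterate_succ_apply']
      exact subset_union_left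
  refine ⟨⋃ k, g^[k] x₀, ⟨countable_iUnion fun k => ?_, fun l hl => ?_⟩,
    subset_iUnion (fun k => g^[k] x₀) 0⟩
  · induction k with
    | zero => exact hx₀
    | succ k ih => rw [iterate_succ_apply']; exact hg_countable _ ih
  · obtain ⟨k, hk⟩ := exists_forall_mem_of_monotone hmono hl
    refine Subset.trans ?_ (subset_iUnion _ (k + 1))
    rw [iterate_succ_apply']
    exact (subset_biUnion_of_mem (u := h)
      (show l ∈ {l : List β | ∀ a ∈ l, a ∈ g^[k] x₀} from hk)).trans subset_union_right

lemma ctbClubIn_setOf_preimage_mem {f : β → A} (hf : Injective f) {C : Set (Set β)}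
    (hC : CtbClubIn univ C) : CtbClubIn (univ : Set A) {U | U.Countable ∧ f ⁻¹' U ∈ C} := by
  obtain ⟨hCmem, hCcof, hCchain⟩ := hC
  refine ⟨fun _ hU => ⟨subset_univ _, hU.1⟩, fun u _ hu => ?_, fun g hg hmono => ?_⟩
  · obtain ⟨c, hc, huc⟩ := hCcof (f ⁻¹' u) (subset_univ _) (hu.preimage hf)
    refine ⟨u ∪ f '' c, ⟨hu.union ((hCmem c hc).2.image f), ?_⟩, subset_union_left⟩
    rwa [preimage_union, hf.preimage_image, union_eq_right.2 huc]
  · refine ⟨countable_iUnion fun n => (hg n).1, ?_⟩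
    rw [preimage_iUnion]
    exact hCchain _ (fun n => (hg n).2) fun m n hmn => preimage_mono (hmono hmn)

lemma CtbClubIn.exists_preimage_eq_of_closedUnder {f : β → A} (hf : Injective f)
    {C : Set (Set A)} (hC : CtbClubIn univ C) :
    ∃ h : List β → Set β, (∀ l, (h l).Countable) ∧
      ∀ x, x.Countable → ClosedUnder h x → ∃ c ∈ C, f ⁻¹' c = x := by
  obtain ⟨hCmem, hCcof, hCchain⟩ := hC
  obtain ⟨c₀, hc₀, -⟩ := hCcof ∅ (empty_subset _) countable_empty
  have hnext : ∀ (c : C) (a : A), ∃ c' : C, insert a (c : Set A) ⊆ c' := fun c a => by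
    obtain ⟨c', hc', hsub⟩ := hCcof (insert a c) (subset_univ _) ((hCmem c c.2).2.insert a)
    exact ⟨⟨c', hc'⟩, hsub⟩
  choose next hnext using hnext
  -- `chain l` swallows the images of the entries of `l` one at a time; `x` closed under
  -- `l ↦ f ⁻¹' chain l` is the trace of the union of `chain` along an enumeration of `x`.
  let chain : List β → C := fun l => l.foldl (fun c b => next c (f b)) ⟨c₀, hc₀⟩
  refine ⟨fun l => f ⁻¹' chain l, fun l => (hCmem _ (chain l).2).2.preimage hf,
    fun x hx hcl => ?_⟩
  rcases x.eq_empty_or_nonempty with rfl | hne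
  · exact ⟨c₀, hc₀, subset_empty_iff.1 (hcl [] (by simp))⟩
  obtain ⟨u, rfl⟩ := hx.exists_eq_range hne
  let c : ℕ → Set A := fun n => chain ((List.range n).map u)
  have hc_succ : ∀ n, c (n + 1) = next (chain ((List.range n).map u)) (f (u n)) := fun n => by
    simp [c, chain, List.range_succ]
  have hmono : Monotone c := monotone_nat_of_le_succ fun n => by
    rw [hc_succ]
    exact (subset_insert _ _).trans (hnext _ _)
  refine ⟨⋃ n, c n, hCchain c (fun n => (chain _).2) hmono, Subset.antisymm ?_ ?_⟩
  · rw [preimage_iUnion]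
    exact iUnion_subset fun n => hcl _ (by simp)
  · rintro _ ⟨n, rfl⟩
    exact mem_iUnion.2 ⟨n + 1, by rw [hc_succ]; exact hnext _ _ (mem_insert _ _)⟩

theorem ctbStatIn_setOf_preimage_mem_iff {f : β → A} (hf : Injective f) {S : Set (Set β)} :
    CtbStatIn univ {U : Set A | U.Countable ∧ f ⁻¹' U ∈ S} ↔ CtbStatIn univ S := by
  refine ⟨fun h C hC => ?_, fun h C hC => ?_⟩
  · obtain ⟨U, ⟨-, hUS⟩, -, hUC⟩ := h _ (ctbClubIn_setOf_preimage_mem hf hC)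
    exact ⟨_, hUS, hUC⟩
  · obtain ⟨g, hg, hgC⟩ := hC.exists_preimage_eq_of_closedUnder hf
    obtain ⟨x, hxS, hx, hxcl⟩ := h _ (ctbClubIn_closedUnder hg)
    obtain ⟨c, hc, rfl⟩ := hgC x hx hxcl
    exact ⟨c, ⟨(hC.1 c hc).2, hxS⟩, hc⟩

lemma CtbStatIn.image_val {Y : Set α} {T : Set (Set Y)} (hT : CtbStatIn univ T) :
    CtbStatIn Y (image Subtype.val '' T) := by
  rintro C ⟨hCmem, hCcof, hCchain⟩
  have hclub : CtbClubIn (univ : Set Y) {c | Subtype.val '' c ∈ C} := by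
    refine ⟨fun c hc => ⟨subset_univ _, ?_⟩, fun x _ hx => ?_, fun g hg hmono => ?_⟩
    · rw [← Subtype.val_injective.preimage_image c]
      exact (hCmem _ hc).2.preimage Subtype.val_injective
    · obtain ⟨c, hc, hxc⟩ := hCcof _ (Subtype.coe_image_subset Y x) (hx.image _)
      refine ⟨Subtype.val ⁻¹' c, ?_, image_subset_iff.1 hxc⟩
      show Subtype.val '' (Subtype.val ⁻¹' c) ∈ C
      rwa [Subtype.image_preimage_coe, inter_eq_right.2 (hCmem c hc).1]
    · show Subtype.val '' ⋃ n, g n ∈ C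
      rw [image_iUnion]
      exact hCchain _ hg fun m n hmn => image_mono (hmono hmn)
  obtain ⟨c, hcT, hcC⟩ := hT _ hclub
  exact ⟨_, mem_image_of_mem _ hcT, hcC⟩

end Stationarity

section Realize

variable {L : FirstOrder.Language.{0, 0}} {A : Type} [L.Structure A] {n m : ℕ}

namespace StatFormula

def imp (φ ψ : StatFormula L n m) : StatFormula L n m := .not (.and φ (.not ψ))

def iff (φ ψ : StatFormula L n m) : StatFormula L n m := .and (φ.imp ψ) (ψ.imp φ)

def allFO (φ : StatFormula L (n + 1) m) : StatFormula L n m := .not (.exFO (.not φ))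

/-- The dual of `stat`: `aa X φ` says that `φ` holds for club many countable `X`. -/
def aa (φ : StatFormula L n (m + 1)) : StatFormula L n m := .not (.stat (.not φ))

end StatFormula

variable {v : Fin n → A} {w : Fin m → Set A}

@[simp] lemma realize_mem {x : Fin n} {X : Fin m} :
    Realize L A (.mem x X) v w ↔ v x ∈ w X := Iff.rfl

@[simp] lemma realize_not {φ : StatFormula L n m} :
    Realize L A φ.not v w ↔ ¬ Realize L A φ v w := Iff.rfl

@[simp] lemma realize_and {φ ψ : StatFormula L n m} :
    Realize L A (φ.and ψ) v w ↔ Realize L A φ v w ∧ Realize L A ψ v w := Iff.rfl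

@[simp] lemma realize_exFO {φ : StatFormula L (n + 1) m} :
    Realize L A φ.exFO v w ↔ ∃ a, Realize L A φ (Fin.snoc v a) w := Iff.rfl

@[simp] lemma realize_stat {φ : StatFormula L n (m + 1)} :
    Realize L A φ.stat v w ↔
      CtbStatIn univ {U : Set A | U.Countable ∧ Realize L A φ v (Fin.snoc w U)} := Iff.rfl

@[simp] lemma realize_imp {φ ψ : StatFormula L n m} :
    Realize L A (φ.imp ψ) v w ↔ (Realize L A φ v w → Realize L A ψ v w) := by
  simp [StatFormula.imp]

@[simp] lemma realize_iff {φ ψ : StatFormula L n m} :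
    Realize L A (φ.iff ψ) v w ↔ (Realize L A φ v w ↔ Realize L A ψ v w) := by
  simp [StatFormula.iff, iff_def]

@[simp] lemma realize_allFO {φ : StatFormula L (n + 1) m} :
    Realize L A φ.allFO v w ↔ ∀ a, Realize L A φ (Fin.snoc v a) w := by
  simp [StatFormula.allFO]

@[simp] lemma realize_aa {φ : StatFormula L n (m + 1)} :
    Realize L A φ.aa v w ↔
      ¬ CtbStatIn univ {U : Set A | U.Countable ∧ ¬ Realize L A φ v (Fin.snoc w U)} := Iff.rfl

end Realize

end StatLogic

section Order

variable {α : Type*} [LinearOrder α]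

lemma exists_forall_lt_of_mk_lt_cof {s : Set α} (hs : #s < Order.cof α) :
    ∃ a, ∀ b ∈ s, b < a := by
  by_contra! h
  exact (Order.cof_le h).not_gt hs

lemma Cardinal.IsRegular.exists_forall_lt {lam : Cardinal} (hreg : lam.IsRegular)
    (hlam : ℵ₀ < lam) {s : Set lam.ord.ToType} (hs : s.Countable) : ∃ a, ∀ b ∈ s, b < a :=
  exists_forall_lt_of_mk_lt_cof <| by
    rw [Ordinal.cof_toType, hreg.cof_ord]
    exact (le_aleph0_iff_set_countable.2 hs).trans_lt hlam

lemma Cardinal.le_aleph_one_of_lt_aleph_two {c : Cardinal} (h : c < ℵ_ 2) : c ≤ ℵ₁ := by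
  rwa [← Order.lt_succ_iff, succ_aleph, one_add_one_eq_two]

lemma not_countable_setOf_countable_Iio [WellFoundedLT α]
    (hbdd : ∀ s : Set α, s.Countable → ∃ a, ∀ b ∈ s, b < a) :
    ¬ {a : α | (Iio a).Countable}.Countable := by
  intro hP
  obtain ⟨a, ha⟩ := hbdd _ hP
  obtain ⟨m, hm, hmin⟩ := wellFounded_lt.has_min {a : α | ¬ (Iio a).Countable}
    ⟨a, fun h => (ha a h).false⟩
  exact hm (hP.mono fun b hb => not_not.1 fun h => hmin b h hb)

lemma subset_of_not_countable_inter {P Y : Set α} (hP : ∀ a ∈ P, (Iio a).Countable)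
    (hY : ∀ a ∈ Y ∩ P, Iio a ⊆ Y) (hYP : ¬ (Y ∩ P).Countable) : P ⊆ Y := by
  intro q hq
  by_contra hqY
  refine hYP ((hP q hq).mono fun r hr => ?_)
  by_contra hrq
  rcases (not_lt.1 hrq).eq_or_lt with rfl | hqr
  · exact hqY hr.1
  · exact hqY (hY r hr hqr)

lemma aleph_one_le_mk_of_forall_le {Y Z : Set α}
    (hY : ∀ Z ⊆ Y, Z.Countable → ∃ y ∈ Y, ∀ z ∈ Z, z < y) (hZY : Z ⊆ Y)
    (hZ : ∀ y ∈ Y, ∃ z ∈ Z, y ≤ z) : ℵ₁ ≤ #Z := by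
  by_contra! h
  obtain ⟨y, hy, hlt⟩ := hY Z hZY (le_aleph0_iff_set_countable.1 (lt_aleph_one_iff.1 h))
  obtain ⟨z, hz, hyz⟩ := hZ y hy
  exact (hlt z hz).not_ge hyz

lemma hasCofinalityAleph1_of_forall_countable {α : Type} [LinearOrder α] {Y : Set α}
    (hcard : #Y = ℵ₁) (hY : ∀ Z ⊆ Y, Z.Countable → ∃ y ∈ Y, ∀ z ∈ Z, z < y) :
    HasCofinalityAleph1 Y :=
  ⟨⟨Y, subset_rfl, fun y hy => ⟨y, hy, le_rfl⟩, hcard⟩,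
    fun _ hZY hZ => aleph_one_le_mk_of_forall_le hY hZY hZ⟩

lemma exists_surjOn_of_mk_le {β : Type*} {s t : Set β} (h : #s ≤ #t) :
    ∃ F : β → β, SurjOn F t s := by
  obtain ⟨j⟩ := h
  refine ⟨extend (fun x : s => (j x : β)) Subtype.val id, fun x hx => ⟨j ⟨x, hx⟩, (j _).2, ?_⟩⟩
  exact (Subtype.val_injective.comp j.injective).extend_apply _ _ ⟨x, hx⟩

end Order

lemma exists_forall_subset_range {M : Type*} {N : M → Set M} (hN : ∀ x, (N x).Countable) :
    ∃ f : ℕ → M → M, ∀ x, N x ⊆ range (f · x) := by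
  choose g hg using fun x => ((hN x).insert x).exists_eq_range (insert_nonempty x (N x))
  exact ⟨fun k x => g x k, fun x => (subset_insert x (N x)).trans (hg x).le⟩

namespace RPCoding

inductive Func : ℕ → Type
  | step : ℕ → Func 1

inductive Rel : ℕ → Type
  | isPoint : Rel 1
  | small : Rel 1
  | lt : Rel 2
  | codes : Rel 2

def lang : FirstOrder.Language.{0, 0} := ⟨Func, Rel⟩

instance : Countable (Σ n, lang.Functions n) :=
  Injective.countable (f := fun | ⟨_, .step k⟩ => k) <| by
    rintro ⟨_, ⟨k⟩⟩ ⟨_, ⟨k'⟩⟩ (rfl : k = k')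
    rfl

instance : Countable (Σ n, lang.Relations n) :=
  Injective.countable (f := fun
    | ⟨_, .isPoint⟩ => (0 : Fin 4) | ⟨_, .small⟩ => 1 | ⟨_, .lt⟩ => 2 | ⟨_, .codes⟩ => 3) <| by
    rintro ⟨_, r⟩ ⟨_, r'⟩ h
    cases r <;> cases r' <;> first | rfl | exact absurd h (by decide)

section Predicates

variable {M : Type} [lang.Structure M]

def IsPoint (x : M) : Prop := RelMap (L := lang) Rel.isPoint ![x]

def IsSmall (x : M) : Prop := RelMap (L := lang) Rel.small ![x]

def PointLT (x y : M) : Prop := RelMap (L := lang) Rel.lt ![x, y]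

def Codes (s x : M) : Prop := RelMap (L := lang) Rel.codes ![s, x]

variable (B : lang.Substructure M)

lemma isPoint_coe (x : B) : IsPoint x ↔ IsPoint (x : M) :=
  Iff.of_eq (congrArg (RelMap (M := M) _) (funext fun k => by fin_cases k; rfl))

lemma isSmall_coe (x : B) : IsSmall x ↔ IsSmall (x : M) :=
  Iff.of_eq (congrArg (RelMap (M := M) _) (funext fun k => by fin_cases k; rfl))

lemma pointLT_coe (x y : B) : PointLT x y ↔ PointLT (x : M) y :=
  Iff.of_eq (congrArg (RelMap (M := M) _) (funext fun k => by fin_cases k <;> rfl))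

lemma codes_coe (s x : B) : Codes s x ↔ Codes (s : M) x :=
  Iff.of_eq (congrArg (RelMap (M := M) _) (funext fun k => by fin_cases k <;> rfl))

end Predicates

section Sentences

variable {n m : ℕ}

def isPointF (i : Fin n) : StatFormula lang n m := .rel Rel.isPoint ![Term.var i]

def isSmallF (i : Fin n) : StatFormula lang n m := .rel Rel.small ![Term.var i]

def pointLTF (i j : Fin n) : StatFormula lang n m := .rel Rel.lt ![Term.var i, Term.var j]

def codesF (i j : Fin n) : StatFormula lang n m := .rel Rel.codes ![Term.var i, Term.var j]

variable {M : Type} [lang.Structure M]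

section
variable {v : Fin n → M} {w : Fin m → Set M}

@[simp] lemma realize_isPointF {i : Fin n} : Realize lang M (isPointF i) v w ↔ IsPoint (v i) :=
  Iff.of_eq (congrArg (RelMap _) (funext fun k => by fin_cases k; rfl))

@[simp] lemma realize_isSmallF {i : Fin n} : Realize lang M (isSmallF i) v w ↔ IsSmall (v i) :=
  Iff.of_eq (congrArg (RelMap _) (funext fun k => by fin_cases k; rfl))

@[simp] lemma realize_pointLTF {i j : Fin n} :
    Realize lang M (pointLTF i j) v w ↔ PointLT (v i) (v j) :=
  Iff.of_eq (congrArg (RelMap _) (funext fun k => by fin_cases k <;> rfl))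

@[simp] lemma realize_codesF {i j : Fin n} :
    Realize lang M (codesF i j) v w ↔ Codes (v i) (v j) :=
  Iff.of_eq (congrArg (RelMap _) (funext fun k => by fin_cases k <;> rfl))

end

-- A quantifier binds the next free index: `exFO` over `Fin n` names its witness `n`.
def codedSentence : StatFormula lang 0 0 :=
  .stat (.exFO (.and (.not (isPointF 0))
    (.allFO (.imp (isPointF 1) (.iff (codesF 0 1) (.mem 1 0))))))

def boundedSentence : StatFormula lang 0 0 :=
  .aa (.exFO (.and (isPointF 0) (.allFO (.imp (.mem 1 0) (.imp (isPointF 1) (pointLTF 1 0))))))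

def smallSentence : StatFormula lang 0 0 :=
  .stat (.exFO (.and (isSmallF 0) (.not (.mem 0 0))))

variable {v : Fin 0 → M} {w : Fin 0 → Set M}

lemma realize_codedSentence : Realize lang M codedSentence v w ↔
    CtbStatIn univ {U : Set M | U.Countable ∧
      ∃ s, ¬ IsPoint s ∧ ∀ x, IsPoint x → (Codes s x ↔ x ∈ U)} := by
  simp [codedSentence, Fin.snoc]

lemma realize_boundedSentence : Realize lang M boundedSentence v w ↔
    ∀ U : Set M, U.Countable → ∃ y, IsPoint y ∧ ∀ z ∈ U, IsPoint z → PointLT z y := by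
  rw [← not_ctbStatIn_setOf_not_iff fun U V hUV ⟨y, hy, hV⟩ => ⟨y, hy, fun z hz => hV z (hUV hz)⟩]
  simp [boundedSentence, Fin.snoc]

lemma realize_smallSentence :
    Realize lang M smallSentence v w ↔ ¬ {x : M | IsSmall x}.Countable := by
  rw [← ctbStatIn_setOf_not_subset_iff]
  simp [smallSentence, Fin.snoc, not_subset]

end Sentences

/-- The structure `(α ⊕ codes, α, small, <, ∈, step k)_{k ∈ ℕ}`: the element `inr t` is a name
for the set `t ⊆ α`. -/
structure Coding (α : Type) where
  small : Set α
  codes : Set (Set α)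
  step : ℕ → α ⊕ codes → α ⊕ codes

namespace Coding

variable {α : Type} [LinearOrder α] (D : Coding α)

abbrev Carrier : Type := α ⊕ D.codes

instance : lang.Structure D.Carrier where
  funMap := fun {_} f x => match f with | .step k => D.step k (x 0)
  RelMap := fun {_} r x => match r with
    | .isPoint => ∃ a, x 0 = Sum.inl a
    | .small => ∃ a ∈ D.small, x 0 = Sum.inl a
    | .lt => ∃ a b, x 0 = Sum.inl a ∧ x 1 = Sum.inl b ∧ a < b
    | .codes => ∃ (t : D.codes) (a : α), x 0 = Sum.inr t ∧ x 1 = Sum.inl a ∧ a ∈ (t : Set α)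

lemma isPoint_iff {x : D.Carrier} : IsPoint x ↔ ∃ a, x = Sum.inl a := Iff.rfl

lemma isSmall_iff {x : D.Carrier} : IsSmall x ↔ ∃ a ∈ D.small, x = Sum.inl a := Iff.rfl

lemma pointLT_iff {x y : D.Carrier} :
    PointLT x y ↔ ∃ a b, x = Sum.inl a ∧ y = Sum.inl b ∧ a < b := Iff.rfl

lemma codes_inr_inl {t : D.codes} {a : α} :
    Codes (Sum.inr t : D.Carrier) (Sum.inl a) ↔ a ∈ (t : Set α) := by
  refine ⟨?_, fun hat => ⟨t, a, rfl, rfl, hat⟩⟩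
  rintro ⟨t', b, ht, hb, hbt⟩
  cases Sum.inr_injective ht
  cases Sum.inl_injective hb
  exact hbt

lemma step_mem (B : lang.Substructure D.Carrier) (k : ℕ) :
    MapsTo (D.step k) (B : Set D.Carrier) B :=
  fun x hx => B.fun_mem (Func.step k) ![x] fun i => by fin_cases i; exact hx

lemma realize_smallSentence_of_not_countable (hP : ¬ D.small.Countable)
    {v : Fin 0 → D.Carrier} {w : Fin 0 → Set D.Carrier} :
    Realize lang D.Carrier smallSentence v w := by
  refine realize_smallSentence.2 fun h => hP ((h.preimage Sum.inl_injective).mono ?_)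
  exact fun a ha => ⟨a, ha, rfl⟩

lemma realize_boundedSentence_of_forall_countable
    (hbdd : ∀ s : Set α, s.Countable → ∃ a, ∀ b ∈ s, b < a)
    {v : Fin 0 → D.Carrier} {w : Fin 0 → Set D.Carrier} :
    Realize lang D.Carrier boundedSentence v w := by
  refine realize_boundedSentence.2 fun U hU => ?_
  obtain ⟨a, ha⟩ := hbdd _ (hU.preimage Sum.inl_injective)
  refine ⟨Sum.inl a, ⟨a, rfl⟩, fun z hz ⟨b, hb⟩ => ⟨b, a, hb, rfl, ha b ?_⟩⟩
  rwa [mem_preimage, ← hb]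

lemma realize_codedSentence_of_ctbStatIn (hS : CtbStatIn univ D.codes)
    {v : Fin 0 → D.Carrier} {w : Fin 0 → Set D.Carrier} :
    Realize lang D.Carrier codedSentence v w := by
  refine realize_codedSentence.2 <|
    ((ctbStatIn_setOf_preimage_mem_iff Sum.inl_injective).2 hS).mono ?_
  rintro U ⟨hU, hUS⟩
  refine ⟨hU, Sum.inr ⟨_, hUS⟩, fun ⟨a, h⟩ => Sum.inr_ne_inl h, ?_⟩
  rintro _ ⟨a, rfl⟩
  exact D.codes_inr_inl

variable {D} (B : lang.Substructure D.Carrier)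

lemma not_countable_preimage_inter_small
    (hB : Realize lang D.Carrier smallSentence Fin.elim0 Fin.elim0 →
      Realize lang B smallSentence Fin.elim0 Fin.elim0)
    (hP : ¬ D.small.Countable) : ¬ (Sum.inl ⁻¹' (B : Set D.Carrier) ∩ D.small).Countable := by
  intro hct
  refine realize_smallSentence.1 (hB (D.realize_smallSentence_of_not_countable hP))
    (((hct.image Sum.inl).preimage Subtype.val_injective).mono ?_)
  intro x hx
  obtain ⟨a, ha, hxa⟩ := D.isSmall_iff.1 ((isSmall_coe B x).1 hx)
  exact ⟨a, ⟨show Sum.inl a ∈ B from hxa ▸ x.2, ha⟩, hxa.symm⟩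

lemma exists_forall_lt_of_countable
    (hB : Realize lang D.Carrier boundedSentence Fin.elim0 Fin.elim0 →
      Realize lang B boundedSentence Fin.elim0 Fin.elim0)
    (hbdd : ∀ s : Set α, s.Countable → ∃ a, ∀ b ∈ s, b < a)
    {Z : Set α} (hZY : Z ⊆ Sum.inl ⁻¹' (B : Set D.Carrier)) (hZ : Z.Countable) :
    ∃ y ∈ Sum.inl ⁻¹' (B : Set D.Carrier), ∀ z ∈ Z, z < y := by
  obtain ⟨y, hy, hlt⟩ :=
    realize_boundedSentence.1 (hB (D.realize_boundedSentence_of_forall_countable hbdd))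
      (Subtype.val ⁻¹' (Sum.inl '' Z)) ((hZ.image _).preimage Subtype.val_injective)
  obtain ⟨b, hyb⟩ := D.isPoint_iff.1 ((isPoint_coe B y).1 hy)
  refine ⟨b, show Sum.inl b ∈ B from hyb ▸ y.2, fun z hz => ?_⟩
  obtain ⟨a, b', ha, hb', hab⟩ := D.pointLT_iff.1 <| (pointLT_coe B _ _).1 <|
    hlt ⟨Sum.inl z, hZY hz⟩ ⟨z, hz, rfl⟩ ((isPoint_coe B _).2 ⟨z, rfl⟩)
  cases Sum.inl_injective ha
  cases Sum.inl_injective (hyb.symm.trans hb')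
  exact hab

lemma ctbStatIn_codes_subset
    (hB : Realize lang D.Carrier codedSentence Fin.elim0 Fin.elim0 →
      Realize lang B codedSentence Fin.elim0 Fin.elim0)
    (hS : CtbStatIn univ D.codes)
    (hcodes : ∀ t : D.codes, Sum.inr t ∈ B → (t : Set α) ⊆ Sum.inl ⁻¹' (B : Set D.Carrier)) :
    CtbStatIn (Sum.inl ⁻¹' (B : Set D.Carrier))
      {x ∈ D.codes | x ⊆ Sum.inl ⁻¹' (B : Set D.Carrier)} := by
  set Y := Sum.inl ⁻¹' (B : Set D.Carrier)
  let e : Y → B := fun a => ⟨Sum.inl a, a.2⟩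
  have he : Injective e := fun a b h => Subtype.ext (Sum.inl_injective (congrArg Subtype.val h))
  have hT := realize_codedSentence.1 (hB (D.realize_codedSentence_of_ctbStatIn hS))
  refine (((ctbStatIn_setOf_preimage_mem_iff he
    (S := {s : Set Y | Subtype.val '' s ∈ D.codes})).1 (hT.mono ?_)).image_val).mono ?_
  · rintro U ⟨hU, s, hs, hsU⟩
    refine ⟨hU, ?_⟩
    rcases hs' : (s : D.Carrier) with a | t
    · exact absurd ((isPoint_coe B s).2 ⟨a, hs'⟩) hs
    have hpre : e ⁻¹' U = Subtype.val ⁻¹' (t : Set α) := by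
      ext a
      rw [mem_preimage, ← hsU (e a) ((isPoint_coe B _).2 ⟨a, rfl⟩), codes_coe, hs']
      exact D.codes_inr_inl
    show Subtype.val '' (e ⁻¹' U) ∈ D.codes
    rw [hpre, Subtype.image_preimage_coe, inter_eq_right.2 (hcodes t (hs' ▸ s.2))]
    exact t.2
  · rintro _ ⟨s, hs, rfl⟩
    exact ⟨hs, Subtype.coe_image_subset _ _⟩

end Coding

lemma exists_coding {α : Type} [LinearOrder α] {P : Set α} (hP : ∀ a ∈ P, (Iio a).Countable)
    (F : α → α) {S : Set (Set α)} (hS : ∀ t ∈ S, t.Countable) :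
    ∃ D : Coding α, D.small = P ∧ D.codes = S ∧ ∀ B : lang.Substructure D.Carrier,
      (∀ a ∈ Sum.inl ⁻¹' (B : Set D.Carrier) ∩ P, Iio a ⊆ Sum.inl ⁻¹' (B : Set D.Carrier)) ∧
      MapsTo F (Sum.inl ⁻¹' (B : Set D.Carrier)) (Sum.inl ⁻¹' (B : Set D.Carrier)) ∧
      ∀ t : D.codes, Sum.inr t ∈ B → (t : Set α) ⊆ Sum.inl ⁻¹' (B : Set D.Carrier) := by
  let N : α ⊕ S → Set (α ⊕ S) :=
    Sum.elim (fun a => Sum.inl '' insert (F a) {b | a ∈ P ∧ b < a}) (fun t => Sum.inl '' t)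
  have hN : ∀ x, (N x).Countable := by
    rintro (a | t)
    · refine (Countable.insert _ ?_).image _
      by_cases ha : a ∈ P
      · exact (hP a ha).mono fun b hb => hb.2
      · simp [ha]
    · exact (hS t t.2).image _
  obtain ⟨step, hstep⟩ := exists_forall_subset_range hN
  refine ⟨⟨P, S, step⟩, rfl, rfl, fun B => ?_⟩
  have hNB : ∀ x ∈ B, N x ⊆ B := fun x hx y hy => by
    obtain ⟨k, rfl⟩ := hstep x hy
    exact Coding.step_mem _ B k hx
  exact ⟨fun a ha b hb => hNB _ ha.1 ⟨b, Or.inr ⟨ha.2, hb⟩, rfl⟩,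
    fun a ha => hNB _ ha ⟨F a, Or.inl rfl, rfl⟩, fun t ht b hb => hNB _ ht ⟨b, hb, rfl⟩⟩

end RPCoding

open RPCoding

/-- `SDLS⁻(ℒ^{ℵ₀}_{stat}, <ℵ₂)` implies the reflection
principle `RP`. -/
theorem SDLSminus_implies_RP (h : SDLSminus (Cardinal.aleph 2)) : RP := by
  intro lam hreg h2 S hSct hSstat X hXcard
  have hlam : ℵ₀ < lam := aleph0_lt_aleph_one.trans_le ((aleph_le_aleph.2 one_le_two).trans h2)
  have hbdd : ∀ s : Set lam.ord.ToType, s.Countable → ∃ a, ∀ b ∈ s, b < a :=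
    fun s hs => hreg.exists_forall_lt hlam hs
  set P := {a : lam.ord.ToType | (Iio a).Countable}
  have hP : ¬ P.Countable := not_countable_setOf_countable_Iio hbdd
  obtain ⟨F, hF⟩ := exists_surjOn_of_mk_le
    (hXcard.trans_le (aleph_one_le_iff.2 (not_le.1 (mt le_aleph0_iff_set_countable.1 hP))))
  have hPct : ∀ a ∈ P, (Iio a).Countable := fun a ha => ha
  clear_value P
  obtain ⟨D, rfl, rfl, hclosed⟩ := exists_coding hPct F hSct
  have : Uncountable lam.ord.ToType := aleph0_lt_mk_iff.1 (by rwa [mk_toType, card_ord])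
  obtain ⟨B, hBcard, hBel⟩ := h lang D.Carrier inferInstance inferInstance inferInstance
  have hB : ∀ φ, Realize lang D.Carrier φ Fin.elim0 Fin.elim0 →
      Realize lang B φ Fin.elim0 Fin.elim0 :=
    fun φ hφ => (hBel 0 φ Fin.elim0).2 (by convert hφ)
  set Y := Sum.inl ⁻¹' (B : Set D.Carrier)
  obtain ⟨hdown, hFY, hcodes⟩ := hclosed B
  have hXY : X ⊆ Y := hF.trans <| image_subset_iff.2 <| (subset_of_not_countable_inter
    hPct hdown (Coding.not_countable_preimage_inter_small B (hB _) hP)).trans hFY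
  have hYcard : #Y = ℵ₁ := le_antisymm (le_aleph_one_of_lt_aleph_two
    ((mk_preimage_of_injective _ _ Sum.inl_injective).trans_lt hBcard))
    (hXcard ▸ mk_le_mk_of_subset hXY)
  exact ⟨Y, hYcard, hasCofinalityAleph1_of_forall_countable hYcard
    (fun Z hZY hZ => Coding.exists_forall_lt_of_countable B (hB _) hbdd hZY hZ), hXY,
    Coding.ctbStatIn_codes_subset B (hB _) hSstat hcodes⟩
end

section
/- The principle SDLS(ℒ^{ℵ₀}_{stat}, <2^{ℵ₀}) is inconsistent (refutable in ZFC). -/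
open Cardinal FirstOrder

namespace StatLogicAux

open StatLogic

/-- The language with countably many constants (for the natural numbers) and one
binary relation (membership of a natural number in a set of naturals). -/
abbrev MyL : FirstOrder.Language.{0,0} :=
  ⟨fun n => match n with | 0 => ℕ | _ => Empty,
   fun n => match n with | 2 => Unit | _ => Empty⟩

/-- The structure: naturals together with all sets of naturals. -/
abbrev MyA : Type := ℕ ⊕ Set ℕ

instance myStruct : MyL.Structure MyA where
  funMap {n} f _ :=
    match n, f with
    | 0, k => Sum.inl k
  RelMap {n} r x :=
    match n, r, x with
    | 2, _, x => ∃ k s, x 0 = Sum.inl k ∧ x 1 = Sum.inr s ∧ k ∈ s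

/-- The formula `∃ y ∀ a (E(a, y) ↔ a ∈ X)`, written with `¬∃¬` for `∀` and
with `↔` expressed through `∧`/`¬`. Free second-order variable `X`. -/
def phi : StatFormula MyL 0 1 :=
  .exFO (.not (.exFO (.not (.and
    (.not (.and (.rel () ![.var 1, .var 0]) (.not (.mem 1 0))))
    (.not (.and (.mem 1 0) (.not (.rel () ![.var 1, .var 0]))))))))

lemma realize_phi_iff (B : Type) [inst : MyL.Structure B] (w : Set B) :
    Realize MyL B phi Fin.elim0 (fun _ => w) ↔
      ∃ y : B, ∀ a : B,
        (@FirstOrder.Language.Structure.RelMap MyL B inst 2 () ![a, y] ↔ a ∈ w) := by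
  have hsnoc : ∀ y a : B,
      (fun i => @FirstOrder.Language.Term.realize MyL B inst (Fin 2)
          (Fin.snoc (Fin.snoc Fin.elim0 y) a)
          ((![FirstOrder.Language.var 1, FirstOrder.Language.var 0] : Fin 2 → MyL.Term (Fin 2)) i))
        = ![a, y] := by
    intro y a; funext i; fin_cases i <;> simp [Fin.snoc]
  have hv : ∀ y a : B, (Fin.snoc (Fin.snoc (Fin.elim0 : Fin 0 → B) y) a : Fin 2 → B) (1 : Fin 2) = a := by
    intro y a; simp [Fin.snoc]
  simp only [phi, Realize, hsnoc, hv]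
  constructor
  · rintro ⟨y, hy⟩
    rw [not_exists] at hy
    exact ⟨y, fun a => by have := hy a; tauto⟩
  · rintro ⟨y, hy⟩
    refine ⟨y, ?_⟩
    rw [not_exists]
    intro a; have := hy a; tauto

lemma relMap_myA (a y : MyA) :
    @FirstOrder.Language.Structure.RelMap MyL MyA myStruct 2 () ![a, y] ↔
      ∃ k s, a = Sum.inl k ∧ y = Sum.inr s ∧ k ∈ s := by
  constructor
  · intro h; exact h
  · intro h; exact h

lemma relMap_sub (S : MyL.Substructure MyA) (a y : ↥S) :
    @FirstOrder.Language.Structure.RelMap MyL ↥S inferInstance 2 () ![a, y] ↔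
      @FirstOrder.Language.Structure.RelMap MyL MyA myStruct 2 () ![(a : MyA), (y : MyA)] := by
  have h : (fun i => ((![a, y] : Fin 2 → ↥S) i : MyA)) = ![(a : MyA), (y : MyA)] := by
    funext i; fin_cases i <;> simp
  show @FirstOrder.Language.Structure.RelMap MyL MyA myStruct 2 ()
      (fun i => ((![a, y] : Fin 2 → ↥S) i : MyA)) ↔ _
  rw [h]

instance : ∀ n, Countable (MyL.Functions n) := fun n =>
  match n with
  | 0 => inferInstanceAs (Countable ℕ)
  | _ + 1 => inferInstanceAs (Countable Empty)

instance : ∀ n, Countable (MyL.Relations n) := fun n =>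
  match n with
  | 0 => inferInstanceAs (Countable Empty)
  | 1 => inferInstanceAs (Countable Empty)
  | 2 => inferInstanceAs (Countable Unit)
  | _ + 3 => inferInstanceAs (Countable Empty)

instance : Uncountable (Set ℕ) := by
  rw [← not_countable_iff]
  intro hc
  obtain ⟨f, hf⟩ := @exists_surjective_nat (Set ℕ) ⟨∅⟩ hc
  exact Function.cantor_surjective f hf

instance : Uncountable MyA := Sum.inr_injective.uncountable

end StatLogicAux

open StatLogicAux

open StatLogic in
/-- The principle `SDLS(ℒ^{ℵ₀}_{stat}, <2^{ℵ₀})` (with full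
elementarity for stationary logic, allowing countable second-order parameters) is
refutable in ZFC. -/
theorem not_SDLSfull_continuum : ¬ SDLSfull (2 ^ Cardinal.aleph0) := by
  intro h
  obtain ⟨S, hcard, helem⟩ := h MyL MyA inferInstance inferInstance inferInstance
  have hconst : ∀ k : ℕ, (Sum.inl k : MyA) ∈ S := by
    intro k
    have := S.fun_mem (k : MyL.Functions 0) Fin.elim0 (fun i => i.elim0)
    exact this
  have key : ∀ z : Set ℕ, ∃ y : ↥S, ∀ n : ℕ,
      (n ∈ z ↔ @FirstOrder.Language.Structure.RelMap MyL MyA myStruct 2 ()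
        ![Sum.inl n, (y : MyA)]) := by
    intro z
    set w : Set MyA := Sum.inl '' z with hw
    have hwc : w.Countable := (Set.to_countable z).image _
    have hws : w ⊆ (S : Set MyA) := by
      rintro _ ⟨n, _, rfl⟩; exact hconst n
    have hA : Realize MyL MyA phi (fun i => ((Fin.elim0 i : ↥S) : MyA)) (fun _ => w) := by
      have he : (fun i => ((Fin.elim0 i : ↥S) : MyA)) = (Fin.elim0 : Fin 0 → MyA) :=
        funext fun i => i.elim0
      rw [he, realize_phi_iff]
      refine ⟨Sum.inr z, fun a => ?_⟩
      rw [relMap_myA]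
      constructor
      · rintro ⟨k, s, rfl, hs, hk⟩
        obtain rfl := Sum.inr.inj hs
        exact ⟨k, hk, rfl⟩
      · rintro ⟨k, hk, rfl⟩
        exact ⟨k, z, rfl, rfl, hk⟩
    have hS := (helem 0 1 phi Fin.elim0 (fun _ => w) (fun _ => ⟨hwc, hws⟩)).mpr hA
    rw [realize_phi_iff] at hS
    obtain ⟨y, hy⟩ := hS
    refine ⟨y, fun n => ?_⟩
    have := hy ⟨Sum.inl n, hconst n⟩
    rw [relMap_sub] at this
    have hmem : (⟨Sum.inl n, hconst n⟩ : ↥S) ∈ {x : ↥S | (x : MyA) ∈ w} ↔ n ∈ z := by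
      simp only [Set.mem_setOf_eq, hw, Set.mem_image, Sum.inl.injEq]
      constructor
      · rintro ⟨k, hk, rfl⟩; exact hk
      · intro hn; exact ⟨n, hn, rfl⟩
    rw [hmem] at this
    exact this.symm
  choose g hg using key
  have ginj : Function.Injective g := by
    intro z z' hzz
    ext n
    rw [hg z n, hzz, ← hg z' n]
  have hle : Cardinal.mk (Set ℕ) ≤ Cardinal.mk ↥S := Cardinal.mk_le_of_injective ginj
  rw [Cardinal.mk_set, Cardinal.mk_nat] at hle
  exact absurd (lt_of_le_of_lt hle hcard) (lt_irrefl _)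
end
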